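/- Let a, m > 0 and c ≥ 2√a, set λ = (c − √(c² − 4a))/2, φ(x) = 1 + e^{−λx}/(1+a), ρ(x) = √(c² − 4a·φ(x)^{−m}) and θ₁(x) = (c − ρ(x))/(2·φ(x)^{−m}). Then θ₁ is differentiable on ℝ with θ₁'(x) = 4a²mλ·e^{−λx} / (ρ(x)·(c + ρ(x))²·φ(x)^{m+1}·(1+a)) > 0 for every x ∈ ℝ; in particular θ₁ is strictly increasing. -/

import Mathlib

/-!
Rationalizing the numerator turns `θ₁` into `2a / (c + ρ)`. Since `φ > 1` and `m > 0`,
`φ ^ (-m) < 1 ≤ c² / (4a)`, so `ρ > 0` and the chain rule applies everywhere. As `λ > 0`,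
`φ` is strictly decreasing, so `ρ` is strictly decreasing and `θ₁ = 2a / (c + ρ)` strictly
increasing.
-/

open Real

lemma four_mul_le_sq_of_two_mul_sqrt_le {a c : ℝ} (ha : 0 ≤ a) (hc : 2 * √a ≤ c) :
    4 * a ≤ c ^ 2 := by
  nlinarith [sq_sqrt ha, sqrt_nonneg a]

lemma sqrt_sq_sub_four_mul_lt {a c : ℝ} (ha : 0 < a) (hc : 2 * √a ≤ c) :
    √(c ^ 2 - 4 * a) < c := by
  rw [sqrt_lt' ((by positivity : 0 < 2 * √a).trans_le hc)]
  linarith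

lemma sq_sub_four_mul_mul_rpow_neg_pos {a c m y : ℝ} (ha : 0 < a) (hc : 2 * √a ≤ c)
    (hm : 0 < m) (hy : 1 < y) : 0 < c ^ 2 - 4 * a * y ^ (-m) := by
  have := rpow_lt_one_of_one_lt_of_neg hy (neg_neg_of_pos hm)
  nlinarith [four_mul_le_sq_of_two_mul_sqrt_le ha.le hc]

lemma sub_sqrt_div_eq_div_add_sqrt {a c P : ℝ} (hP : P ≠ 0) (hI : 0 ≤ c ^ 2 - 4 * a * P)
    (hc : c + √(c ^ 2 - 4 * a * P) ≠ 0) :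
    (c - √(c ^ 2 - 4 * a * P)) / (2 * P) = 2 * a / (c + √(c ^ 2 - 4 * a * P)) := by
  rw [div_eq_div_iff (mul_ne_zero two_ne_zero hP) hc]
  nlinarith [sq_sqrt hI]

lemma hasDerivAt_one_add_exp_neg_mul_div (lam b x : ℝ) :
    HasDerivAt (fun y => 1 + exp (-lam * y) / b) (-(lam * exp (-lam * x)) / b) x := by
  refine ((((hasDerivAt_id x).const_mul (-lam)).exp.div_const b).const_add 1).congr_deriv ?_
  simp only [id, mul_one]
  ring

lemma HasDerivAt.sqrt_sub_mul_rpow_neg {φ : ℝ → ℝ} {φ' x b k m : ℝ} (hφ : HasDerivAt φ φ' x)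
    (hφx : 0 < φ x) (hI : 0 < b - k * φ x ^ (-m)) :
    HasDerivAt (fun y => √(b - k * φ y ^ (-m)))
      (k * m * φ' * φ x ^ (-m - 1) / (2 * √(b - k * φ x ^ (-m)))) x := by
  refine ((((hφ.rpow_const (Or.inl hφx.ne')).const_mul k).const_sub b).sqrt hI.ne').congr_deriv ?_
  ring

lemma HasDerivAt.div_const_add_sqrt_sub_mul_rpow_neg {φ : ℝ → ℝ} {φ' x a c m : ℝ}
    (hφ : HasDerivAt φ φ' x) (hφx : 0 < φ x) (hc : 0 ≤ c) (hI : 0 < c ^ 2 - 4 * a * φ x ^ (-m)) :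
    HasDerivAt (fun y => 2 * a / (c + √(c ^ 2 - 4 * a * φ y ^ (-m))))
      (-(4 * a ^ 2 * m * φ') / (√(c ^ 2 - 4 * a * φ x ^ (-m))
        * (c + √(c ^ 2 - 4 * a * φ x ^ (-m))) ^ 2 * φ x ^ (m + 1))) x := by
  have hρ := sqrt_pos.mpr hI
  refine ((hasDerivAt_const x (2 * a)).div ((hφ.sqrt_sub_mul_rpow_neg hφx hI).const_add c)
    (by positivity)).congr_deriv ?_
  rw [show -m - 1 = -(m + 1) by ring, rpow_neg hφx.le (m + 1)]
  have := rpow_pos_of_pos hφx (m + 1)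
  generalize √(c ^ 2 - 4 * a * φ x ^ (-m)) = ρ at *
  generalize φ x ^ (m + 1) = Q at *
  field_simp
  ring

/-- explicit positive derivative of `θ₁`; in particular `θ₁`
is strictly increasing. -/
theorem theta1_hasDerivAt_and_strictMono
    (a m c : ℝ) (ha : 0 < a) (hm : 0 < m) (hc : 2 * Real.sqrt a ≤ c)
    (lam : ℝ) (hlam : lam = (c - Real.sqrt (c ^ 2 - 4 * a)) / 2)
    (φ ρ θ₁ : ℝ → ℝ)
    (hφ : ∀ x, φ x = 1 + Real.exp (-lam * x) / (1 + a))
    (hρ : ∀ x, ρ x = Real.sqrt (c ^ 2 - 4 * a * (φ x) ^ (-m)))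
    (hθ₁ : ∀ x, θ₁ x = (c - ρ x) / (2 * (φ x) ^ (-m))) :
    (∀ x, HasDerivAt θ₁
        (4 * a ^ 2 * m * lam * Real.exp (-lam * x)
          / (ρ x * (c + ρ x) ^ 2 * (φ x) ^ (m + 1) * (1 + a))) x) ∧
    (∀ x, 0 < 4 * a ^ 2 * m * lam * Real.exp (-lam * x)
          / (ρ x * (c + ρ x) ^ 2 * (φ x) ^ (m + 1) * (1 + a))) ∧
    StrictMono θ₁ := by
  have hc0 : 0 ≤ c := (by positivity : 0 ≤ 2 * √a).trans hc
  have hlam0 : 0 < lam := by linarith [sqrt_sq_sub_four_mul_lt ha hc]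
  have hφ1 (x : ℝ) : 1 < φ x := by
    rw [hφ x]
    have : 0 < exp (-lam * x) / (1 + a) := by positivity
    linarith
  have hφ0 (x : ℝ) : 0 < φ x := one_pos.trans (hφ1 x)
  have hI (x : ℝ) : 0 < c ^ 2 - 4 * a * φ x ^ (-m) :=
    sq_sub_four_mul_mul_rpow_neg_pos ha hc hm (hφ1 x)
  have hρ0 (x : ℝ) : 0 < ρ x := (hρ x).symm ▸ sqrt_pos.mpr (hI x)
  have hθ : θ₁ = fun x => 2 * a / (c + √(c ^ 2 - 4 * a * φ x ^ (-m))) := by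
    funext x
    rw [hθ₁, hρ, sub_sqrt_div_eq_div_add_sqrt (rpow_pos_of_pos (hφ0 x) _).ne' (hI x).le
      (by rw [← hρ]; linarith [hρ0 x])]
  have hderiv (x : ℝ) : HasDerivAt θ₁ (4 * a ^ 2 * m * lam * exp (-lam * x)
      / (ρ x * (c + ρ x) ^ 2 * φ x ^ (m + 1) * (1 + a))) x := by
    have hφ' : HasDerivAt φ (-(lam * exp (-lam * x)) / (1 + a)) x :=
      funext hφ ▸ hasDerivAt_one_add_exp_neg_mul_div lam (1 + a) x
    convert hθ ▸ hφ'.div_const_add_sqrt_sub_mul_rpow_neg (hφ0 x) hc0 (hI x) using 1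
    rw [← hρ]
    simp only [mul_div_assoc', mul_neg, neg_div, neg_neg, div_div]
    rw [mul_comm (1 + a), mul_assoc (4 * a ^ 2 * m)]
  have hpos (x : ℝ) : 0 < 4 * a ^ 2 * m * lam * exp (-lam * x)
      / (ρ x * (c + ρ x) ^ 2 * φ x ^ (m + 1) * (1 + a)) := by
    have := hρ0 x
    have := hφ0 x
    positivity
  exact ⟨hderiv, hpos, strictMono_of_deriv_pos fun x => (hderiv x).deriv ▸ hpos x⟩
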